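/- arXiv:1209.3493 — 7 statements merged into one kernel-verified Lean document; each statement's English description precedes it below -/
import Mathlib

section
/- For every interior lattice point (a,b,c) of the dilated triangle (i.e., (a,b,c) in V(3,n) with a,b,c > 0), the hexagon vector H_{a,b,c} = e_{a-1,b,c+1} - e_{a,b-1,c+1} + e_{a+1,b-1,c} - e_{a+1,b,c-1} + e_{a,b+1,c-1} - e_{a-1,b+1,c} is an eigenvector of the adjacency matrix of SR(3,n) with eigenvalue -3. -/
open Finset

abbrev SRVert (d n : ℕ) : Type := {x : Fin d → ℕ // ∑ i, x i = n}

noncomputable instance SRVert.fintype (d n : ℕ) : Fintype (SRVert d n) :=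
  Fintype.ofInjective
    (fun x : SRVert d n => fun i => (⟨x.1 i, by
      have h := Finset.single_le_sum (f := x.1)
        (fun j _ => Nat.zero_le (x.1 j)) (Finset.mem_univ i)
      have h2 := x.2
      omega⟩ : Fin (n+1)))
    (fun x y h => Subtype.ext (funext fun i => congrArg Fin.val (congrFun h i)))

/-- The simplicial rook graph: two vertices are adjacent if they differ in
exactly two coordinates. -/
def SR (d n : ℕ) : SimpleGraph (SRVert d n) where
  Adj x y := (Finset.univ.filter fun i => x.1 i ≠ y.1 i).card = 2
  symm := by
    constructor
    intro x y h
    rw [show (Finset.univ.filter fun i => y.1 i ≠ x.1 i)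
        = (Finset.univ.filter fun i => x.1 i ≠ y.1 i) by
      apply Finset.filter_congr; intro i _; simp [ne_comm]]
    exact h
  loopless := by constructor; intro z h; simp at h

instance (d n : ℕ) : DecidableRel (SR d n).Adj :=
  fun x y => inferInstanceAs (Decidable (_ = 2))


/-- Characteristic vector of the lattice line `{v : v₀ = i}` in `ℝ^{V(3,n)}`. -/
def Xv (n i : ℕ) : SRVert 3 n → ℝ := fun v => if v.1 0 = i then 1 else 0

/-- Characteristic vector of the lattice line `{v : v₁ = j}`. -/
def Yv (n j : ℕ) : SRVert 3 n → ℝ := fun v => if v.1 1 = j then 1 else 0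

/-- Characteristic vector of the lattice line `{v : v₂ = k}`. -/
def Zv (n k : ℕ) : SRVert 3 n → ℝ := fun v => if v.1 2 = k then 1 else 0

/-- The all-ones vector. -/
def Jv (n : ℕ) : SRVert 3 n → ℝ := fun _ => 1

/-- Standard basis vector `e_v`. -/
def ev {d n : ℕ} (v : SRVert d n) : SRVert d n → ℝ := fun w => if w = v then 1 else 0


/-- The hexagon vector `H_{a,b,c}` (signed characteristic vector of the lattice
hexagon centered at `(a,b,c)`). -/
def hexv (n a b c : ℕ) : SRVert 3 n → ℝ := fun v =>
  (if v.1 = ![a-1, b, c+1] then 1 else 0) - (if v.1 = ![a, b-1, c+1] then 1 else 0)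
  + (if v.1 = ![a+1, b-1, c] then 1 else 0) - (if v.1 = ![a+1, b, c-1] then 1 else 0)
  + (if v.1 = ![a, b+1, c-1] then 1 else 0) - (if v.1 = ![a-1, b+1, c] then 1 else 0)

/- The neighbours of `v` are the points other than `v` on the three lattice lines through `v`,
so `A e_v = X_{v₀} + Y_{v₁} + Z_{v₂} - 3 e_v`. Each of the nine lines through the vertices of the
hexagon meets it in two vertices of opposite sign, so in `A H` the line vectors cancel and only
`-3 H` survives. -/

namespace SRVert

variable {n : ℕ}

def mk₃ (x y z : ℕ) (h : x + y + z = n) : SRVert 3 n :=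
  ⟨![x, y, z], by simpa [Fin.sum_univ_three] using h⟩

lemma sum_three (v : SRVert 3 n) : v.1 0 + v.1 1 + v.1 2 = n := by
  simpa [Fin.sum_univ_three] using v.2

lemma eq_iff_coords {v w : SRVert 3 n} : v = w ↔ v.1 0 = w.1 0 ∧ v.1 1 = w.1 1 := by
  refine ⟨fun h => h ▸ ⟨rfl, rfl⟩, fun ⟨h₀, h₁⟩ => Subtype.ext (funext fun i => ?_)⟩
  have hv := v.sum_three
  have hw := w.sum_three
  fin_cases i <;> simp <;> omega

end SRVert

open SRVert

-- Two distinct points of `V(3,n)` never differ in exactly one coordinate.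
lemma SR_three_adj_iff {n : ℕ} {v w : SRVert 3 n} :
    (SR 3 n).Adj v w ↔ v ≠ w ∧ (v.1 0 = w.1 0 ∨ v.1 1 = w.1 1 ∨ v.1 2 = w.1 2) := by
  show (Finset.univ.filter fun i => v.1 i ≠ w.1 i).card = 2 ↔ _
  rw [Finset.card_filter, Fin.sum_univ_three]
  have hv := v.sum_three
  have hw := w.sum_three
  simp only [ne_eq, eq_iff_coords]
  split_ifs <;> omega

lemma ev_eq_single {d n : ℕ} (v : SRVert d n) : ev v = Pi.single v 1 := by
  funext w
  simp [ev, Pi.single_apply]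

lemma adjMatrix_mulVec_ev {n : ℕ} (v : SRVert 3 n) :
    ((SR 3 n).adjMatrix ℝ).mulVec (ev v) =
      Xv n (v.1 0) + Yv n (v.1 1) + Zv n (v.1 2) - (3 : ℝ) • ev v := by
  rw [ev_eq_single, Matrix.mulVec_single_one]
  funext w
  simp only [Matrix.col_apply, SimpleGraph.adjMatrix_apply, SR_three_adj_iff, Pi.single_apply,
    Pi.add_apply, Pi.sub_apply, Pi.smul_apply, smul_eq_mul, Xv, Yv, Zv, ne_eq, eq_iff_coords]
  have hv := v.sum_three
  have hw := w.sum_three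
  split_ifs <;> norm_num <;> omega

lemma hexv_eq {n a b c : ℕ} (ha : 0 < a) (hb : 0 < b) (hc : 0 < c) (habc : a + b + c = n) :
    hexv n a b c =
      ev (mk₃ (a-1) b (c+1) (by omega)) - ev (mk₃ a (b-1) (c+1) (by omega))
      + ev (mk₃ (a+1) (b-1) c (by omega)) - ev (mk₃ (a+1) b (c-1) (by omega))
      + ev (mk₃ a (b+1) (c-1) (by omega)) - ev (mk₃ (a-1) (b+1) c (by omega)) := by
  funext v
  simp only [hexv, ev, mk₃, Subtype.ext_iff, Pi.add_apply, Pi.sub_apply]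

lemma hexv_apply_mk₃ {n a b c : ℕ} (ha : 0 < a) (habc : a + b + c = n) :
    hexv n a b c (mk₃ (a-1) b (c+1) (by omega)) = 1 := by
  simp only [hexv, mk₃, Matrix.vecCons_inj, and_true, true_and]
  split_ifs <;> first | omega | norm_num

lemma hexv_ne_zero {n a b c : ℕ} (ha : 0 < a) (habc : a + b + c = n) : hexv n a b c ≠ 0 :=
  fun h => by simpa [h] using hexv_apply_mk₃ ha habc

/-- each hexagon vector is an eigenvector of the adjacency matrix
of `SR(3,n)` with eigenvalue `-3`. -/
theorem hex_eigenvector (n a b c : ℕ) (ha : 0 < a) (hb : 0 < b) (hc : 0 < c)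
    (habc : a + b + c = n) :
    hexv n a b c ≠ 0 ∧
    ((SR 3 n).adjMatrix ℝ).mulVec (hexv n a b c) = (-3 : ℝ) • hexv n a b c := by
  refine ⟨hexv_ne_zero ha habc, ?_⟩
  rw [hexv_eq ha hb hc habc]
  simp only [Matrix.mulVec_add, Matrix.mulVec_sub, adjMatrix_mulVec_ev, mk₃,
    Matrix.cons_val_zero, Matrix.cons_val_one, Matrix.cons_val_two, Matrix.head_cons,
    Matrix.tail_cons]
  module
end

section
/- The hexagon vectors {H_{a,b,c} : (a,b,c) in V(3,n), a,b,c > 0} are linearly independent in R^{V(3,n)}. -/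
open Finset

/-! Each `H_{a,b,c}` takes the value `1` at the corner `(a-1, b, c+1)`, and every other hexagon
through that corner has its center `(a', b', c')` strictly below in the weight `2a' + b'`
(the five other centers lose `1`, `3`, `4`, `3`, `1`). So the hexagon vectors are triangular
with respect to evaluation at the corners, hence linearly independent. -/

theorem linearIndependent_of_eval_triangular {ι V R β : Type*} [Ring R] [NoZeroDivisors R]
    [LinearOrder β] (f : ι → V → R) (φ : ι → V) (key : ι → β)
    (hdiag : ∀ i, f i (φ i) ≠ 0)
    (hlower : ∀ i j, j ≠ i → f j (φ i) ≠ 0 → key j < key i) :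
    LinearIndependent R f := by
  classical
  rw [linearIndependent_iff']
  intro s g hg
  by_contra! hsupp
  obtain ⟨i, hi, hmin⟩ := Finset.exists_min_image (s.filter (g · ≠ 0)) key
    (by simpa [Finset.filter_nonempty_iff] using hsupp)
  rw [Finset.mem_filter] at hi
  have heval : ∑ j ∈ s, g j * f j (φ i) = g i * f i (φ i) := by
    refine Finset.sum_eq_single_of_mem i hi.1 fun j hj hji => ?_
    by_cases hgj : g j = 0
    · rw [hgj, zero_mul]
    by_contra hfj
    exact (hmin j (Finset.mem_filter.2 ⟨hj, hgj⟩)).not_gt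
      (hlower i j hji (right_ne_zero_of_mul hfj))
  have hzero := congrFun hg (φ i)
  simp only [Finset.sum_apply, Pi.smul_apply, smul_eq_mul, Pi.zero_apply, heval] at hzero
  exact mul_ne_zero hi.2 (hdiag i) hzero

theorem eq_hexagon_vertex_of_hexv_ne_zero {n a b c : ℕ} {v : SRVert 3 n} (h : hexv n a b c v ≠ 0) :
    v.1 = ![a-1, b, c+1] ∨ v.1 = ![a, b-1, c+1] ∨ v.1 = ![a+1, b-1, c] ∨
      v.1 = ![a+1, b, c-1] ∨ v.1 = ![a, b+1, c-1] ∨ v.1 = ![a-1, b+1, c] := by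
  contrapose! h
  simp [hexv, h]

theorem hexv_apply_corner {n a b c : ℕ} (ha : 0 < a) {v : SRVert 3 n}
    (hv : v.1 = ![a-1, b, c+1]) : hexv n a b c v = 1 := by
  simp only [hexv, hv, Matrix.vecCons_inj, and_true]
  rw [if_pos trivial, if_neg (by omega), if_neg (by omega), if_neg (by omega),
    if_neg (by omega), if_neg (by omega)]
  norm_num

theorem weight_lt_of_hexv_apply_corner_ne_zero {n a b c a' b' c' : ℕ} (ha : 0 < a)
    {v : SRVert 3 n} (hv : v.1 = ![a-1, b, c+1])
    (hne : (a', b', c') ≠ (a, b, c)) (h : hexv n a' b' c' v ≠ 0) :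
    2 * a' + b' < 2 * a + b := by
  rw [Ne, Prod.mk.injEq, Prod.mk.injEq] at hne
  rcases eq_hexagon_vertex_of_hexv_ne_zero h with h | h | h | h | h | h <;>
    simp only [hv, Matrix.vecCons_inj, and_true] at h <;> omega

abbrev HexCenter (n : ℕ) : Type :=
  {p : ℕ × ℕ × ℕ // p.1 + p.2.1 + p.2.2 = n ∧ 0 < p.1 ∧ 0 < p.2.1 ∧ 0 < p.2.2}

def HexCenter.corner {n : ℕ} (p : HexCenter n) : SRVert 3 n :=
  ⟨![p.1.1 - 1, p.1.2.1, p.1.2.2 + 1], by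
    simp only [Fin.sum_univ_three, Matrix.cons_val_zero, Matrix.cons_val_one, Matrix.cons_val]
    omega⟩

/-- the hexagon vectors are linearly independent. -/
theorem hex_linearIndependent (n : ℕ) :
    LinearIndependent ℝ
      (fun p : {p : ℕ × ℕ × ℕ //
          p.1 + p.2.1 + p.2.2 = n ∧ 0 < p.1 ∧ 0 < p.2.1 ∧ 0 < p.2.2} =>
        hexv n p.1.1 p.1.2.1 p.1.2.2) := by
  refine linearIndependent_of_eval_triangular _ HexCenter.corner
    (fun p : HexCenter n => 2 * p.1.1 + p.1.2.1) (fun p => ?_) (fun p q hqp hq => ?_)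
  · rw [hexv_apply_corner p.2.2.1 rfl]
    exact one_ne_zero
  · exact weight_lt_of_hexv_apply_corner_ne_zero p.2.2.1 rfl
      (fun h => hqp (Subtype.ext h)) hq
end

section
/- The span of the lattice-line vectors {X_i, Y_i, Z_i : 0 <= i <= n} in R^{V(3,n)} has dimension exactly 3n, and the 3n vectors {X_i, Y_i, Z_i : 0 <= i <= n-1} form a basis of this span. -/
open Finset

/-!
Write `L c i` for the indicator of the line `{v : v c = i}`. A combination
`∑ a c i • L c i` takes the value `a 0 i + a 1 j + a 2 k` at the vertex `(i, j, k)`. If it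
vanishes and `a c n = 0`, then comparing neighbouring vertices shows that `a 0` is additive
on `[0, n]`, hence linear, hence zero since it vanishes at `n`; by symmetry all the `a c`
vanish, so the lines of level `< n` are independent. The lines of level `n` lie in their span:
`∑ i, L c i = 1`, and `1` itself is a combination of lines because `∑ c, (n - v c) = (d - 1) n`
at every vertex `v`.
-/

theorem SRVert.coord_le {d n : ℕ} (v : SRVert d n) (c : Fin d) : v.1 c ≤ n :=
  v.2.le.trans' (single_le_sum (fun _ _ => Nat.zero_le _) (mem_univ c))

def lineVec {d : ℕ} (n : ℕ) (c : Fin d) (i : ℕ) : SRVert d n → ℝ :=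
  fun v => if v.1 c = i then 1 else 0

def lineFamily (d n m : ℕ) : Fin m × Fin d → SRVert d n → ℝ :=
  fun p => lineVec n p.2 p.1

section Lines

variable {d n : ℕ}

theorem sum_smul_lineVec_apply (c : Fin d) (a : ℕ → ℝ) (m : ℕ) (v : SRVert d n) :
    (∑ i ∈ range m, a i • lineVec n c i) v = if v.1 c < m then a (v.1 c) else 0 := by
  simp [lineVec, Finset.sum_apply]

theorem sum_range_succ_smul_lineVec_apply (c : Fin d) (a : ℕ → ℝ) (v : SRVert d n) :
    (∑ i ∈ range (n + 1), a i • lineVec n c i) v = a (v.1 c) := by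
  rw [sum_smul_lineVec_apply, if_pos (Nat.lt_succ_of_le (v.coord_le c))]

theorem sum_lineVec (c : Fin d) : ∑ i ∈ range (n + 1), lineVec n c i = 1 := by
  funext v
  simpa using sum_range_succ_smul_lineVec_apply c 1 v

theorem lineVec_mem_span_lineFamily_of_lt {m : ℕ} (c : Fin d) {i : ℕ} (hi : i < m) :
    lineVec n c i ∈ Submodule.span ℝ (Set.range (lineFamily d n m)) :=
  Submodule.subset_span ⟨(⟨i, hi⟩, c), rfl⟩

theorem one_mem_span_lineFamily (hd : 2 ≤ d) (hn : 1 ≤ n) :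
    (1 : SRVert d n → ℝ) ∈ Submodule.span ℝ (Set.range (lineFamily d n n)) := by
  have hone : (1 : SRVert d n → ℝ) = (((d : ℝ) - 1) * n)⁻¹ •
      ∑ c, ∑ i ∈ range n, ((n : ℝ) - i) • lineVec n c i := by
    funext v
    have hsum : ∑ c, (v.1 c : ℝ) = n := by exact_mod_cast v.2
    have hterm : ∀ c, (if v.1 c < n then (n : ℝ) - v.1 c else 0) = n - v.1 c := by
      intro c
      split_ifs with h
      · rfl
      · rw [Nat.le_antisymm (v.coord_le c) (not_lt.1 h), sub_self]
    have hd' : (d : ℝ) - 1 ≠ 0 := by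
      rw [sub_ne_zero]; exact_mod_cast (by omega : d ≠ 1)
    have hn' : (n : ℝ) ≠ 0 := by exact_mod_cast (by omega : n ≠ 0)
    rw [Pi.smul_apply, Finset.sum_apply]
    simp only [sum_smul_lineVec_apply, hterm, sum_sub_distrib, hsum, sum_const, card_univ,
      Fintype.card_fin, nsmul_eq_mul, Pi.one_apply, smul_eq_mul]
    field_simp
  rw [hone]
  refine Submodule.smul_mem _ _ (Submodule.sum_mem _ fun c _ => Submodule.sum_mem _ fun i hi => ?_)
  exact Submodule.smul_mem _ _ (lineVec_mem_span_lineFamily_of_lt c (mem_range.1 hi))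

theorem lineVec_mem_span_lineFamily (hd : 2 ≤ d) (hn : 1 ≤ n) (c : Fin d) {i : ℕ}
    (hi : i ≤ n) :
    lineVec n c i ∈ Submodule.span ℝ (Set.range (lineFamily d n n)) := by
  rcases hi.lt_or_eq with hi | rfl
  · exact lineVec_mem_span_lineFamily_of_lt c hi
  · have hlast : lineVec i c i = 1 - ∑ j ∈ range i, lineVec i c j := by
      rw [← sum_lineVec c, sum_range_succ, add_sub_cancel_left]
    rw [hlast]
    exact Submodule.sub_mem _ (one_mem_span_lineFamily hd hn)
      (Submodule.sum_mem _ fun j hj => lineVec_mem_span_lineFamily_of_lt c (mem_range.1 hj))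

theorem span_lineFamily_eq (hd : 2 ≤ d) (hn : 1 ≤ n) :
    Submodule.span ℝ (Set.range (lineFamily d n n))
      = Submodule.span ℝ (Set.range (lineFamily d n (n + 1))) := by
  apply le_antisymm
  · exact Submodule.span_mono (Set.range_subset_iff.2 fun p =>
      ⟨(Fin.castSucc p.1, p.2), rfl⟩)
  · rw [Submodule.span_le, Set.range_subset_iff]
    exact fun p => lineVec_mem_span_lineFamily hd hn p.2 (Nat.lt_succ_iff.1 p.1.isLt)

end Lines

theorem eq_zero_of_forall_add_add_eq_zero {K : Type*} [Field K] [CharZero K] {n : ℕ}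
    {F G H : ℕ → K} (h : ∀ i j k, i + j + k = n → F i + G j + H k = 0)
    (hF : F n = 0) (hG : G n = 0) (hH : H n = 0) {i : ℕ} (hi : i ≤ n) : F i = 0 := by
  have hF0 : F 0 = 0 := by
    have h1 := h n 0 0 (by omega)
    have h2 := h 0 n 0 (by omega)
    have h3 := h 0 0 n (by omega)
    have : (2 : K) * F 0 = 0 := by linear_combination h2 + h3 - h1 - hG - hH + hF
    exact (mul_eq_zero.1 this).resolve_left two_ne_zero
  have hstep : ∀ a, a + 1 ≤ n → F (a + 1) = F a + F 1 := by
    intro a ha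
    have e1 := h a 1 (n - a - 1) (by omega)
    have e2 := h (a + 1) 0 (n - a - 1) (by omega)
    have e3 := h 1 0 (n - 1) (by omega)
    have e4 := h 0 1 (n - 1) (by omega)
    linear_combination e2 - e1 - e3 + e4 - hF0
  have hlin : ∀ a ≤ n, F a = a * F 1 := by
    intro a
    induction a with
    | zero => simp [hF0]
    | succ a ih =>
      intro ha
      rw [hstep a ha, ih (by omega)]
      push_cast
      ring
  rcases Nat.eq_zero_or_pos n with rfl | hpos
  · rwa [Nat.le_zero.1 hi]
  · have hF1 : F 1 = 0 := by
      have : (n : K) * F 1 = 0 := hlin n le_rfl ▸ hF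
      exact (mul_eq_zero.1 this).resolve_left (Nat.cast_ne_zero.2 hpos.ne')
    rw [hlin i hi, hF1, mul_zero]

theorem linearIndependent_lineFamily (n : ℕ) : LinearIndependent ℝ (lineFamily 3 n n) := by
  rw [Fintype.linearIndependent_iff]
  intro g hg
  set a : Fin 3 → ℕ → ℝ := fun c m => if h : m < n then g (⟨m, h⟩, c) else 0
  have ha_last : ∀ c, a c n = 0 := fun c => by simp [a]
  have hcomb : ∑ p, g p • lineFamily 3 n n p
      = ∑ c, ∑ i ∈ range (n + 1), a c i • lineVec n c i := by
    rw [Fintype.sum_prod_type_right]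
    refine sum_congr rfl fun c _ => ?_
    rw [sum_range_succ, ha_last, zero_smul, add_zero,
      ← Fin.sum_univ_eq_sum_range (fun i => a c i • lineVec n c i)]
    refine sum_congr rfl fun i _ => ?_
    simp [a, lineFamily]
  have hvert : ∀ i j k, i + j + k = n → a 0 i + a 1 j + a 2 k = 0 := by
    intro i j k hijk
    have := congrFun hg ⟨![i, j, k], by simp [Fin.sum_univ_three, hijk]⟩
    rwa [hcomb, Finset.sum_apply, Fin.sum_univ_three, sum_range_succ_smul_lineVec_apply,
      sum_range_succ_smul_lineVec_apply, sum_range_succ_smul_lineVec_apply] at this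
  rintro ⟨i, c⟩
  have hi : a c i = 0 := by
    fin_cases c
    · exact eq_zero_of_forall_add_add_eq_zero hvert (ha_last 0) (ha_last 1) (ha_last 2) i.isLt.le
    · exact eq_zero_of_forall_add_add_eq_zero (G := a 0) (H := a 2)
        (fun j i k h => by linear_combination hvert i j k (by omega))
        (ha_last 1) (ha_last 0) (ha_last 2) i.isLt.le
    · exact eq_zero_of_forall_add_add_eq_zero (G := a 0) (H := a 1)
        (fun k i j h => by linear_combination hvert i j k (by omega))
        (ha_last 2) (ha_last 0) (ha_last 1) i.isLt.le
  simpa [a] using hi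

theorem lineFamily_three (n m : ℕ) :
    lineFamily 3 n m = fun p : Fin m × Fin 3 => ![Xv n p.1, Yv n p.1, Zv n p.1] p.2 := by
  funext ⟨i, c⟩
  fin_cases c <;> rfl

theorem setOf_lattice_lines_eq_range (n : ℕ) :
    {w : SRVert 3 n → ℝ | ∃ i ≤ n, w = Xv n i ∨ w = Yv n i ∨ w = Zv n i}
      = Set.range (lineFamily 3 n (n + 1)) := by
  rw [lineFamily_three]
  ext w
  constructor
  · rintro ⟨i, hi, rfl | rfl | rfl⟩
    exacts [⟨(⟨i, by omega⟩, 0), rfl⟩, ⟨(⟨i, by omega⟩, 1), rfl⟩,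
      ⟨(⟨i, by omega⟩, 2), rfl⟩]
  · rintro ⟨⟨i, c⟩, rfl⟩
    fin_cases c
    exacts [⟨i, by omega, .inl rfl⟩, ⟨i, by omega, .inr (.inl rfl)⟩,
      ⟨i, by omega, .inr (.inr rfl)⟩]

/-- the span of all lattice-line vectors has dimension `3n`, and
the `3n` vectors `X_i, Y_i, Z_i` for `0 ≤ i ≤ n-1` form a basis of this span. -/
theorem lattice_line_span (n : ℕ) (hn : 1 ≤ n) :
    Module.finrank ℝ (Submodule.span ℝ
        {w : SRVert 3 n → ℝ | ∃ i ≤ n, w = Xv n i ∨ w = Yv n i ∨ w = Zv n i}) = 3 * n ∧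
    LinearIndependent ℝ
      (fun p : Fin n × Fin 3 => ![Xv n p.1, Yv n p.1, Zv n p.1] p.2) ∧
    Submodule.span ℝ
        (Set.range (fun p : Fin n × Fin 3 => ![Xv n p.1, Yv n p.1, Zv n p.1] p.2))
      = Submodule.span ℝ
        {w : SRVert 3 n → ℝ | ∃ i ≤ n, w = Xv n i ∨ w = Yv n i ∨ w = Zv n i} := by
  have hli := linearIndependent_lineFamily n
  rw [← lineFamily_three, setOf_lattice_lines_eq_range, ← span_lineFamily_eq (by norm_num) hn,
    finrank_span_eq_card hli]
  exact ⟨by simp [mul_comm], hli, rfl⟩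
end

section
/- Let n >= 1 and k = floor(n/2). Then the vector R = X_k - Y_k - X_{k+1} + Y_{k+1} is a nonzero eigenvector of the adjacency matrix of SR(3,n), with eigenvalue (n-6)/2 if n is even and (n-3)/2 if n is odd. -/
open Finset

/-! Counting the neighbours of a vertex on a line gives
`A X_a = (n - a - 2) X_a + ∑_{b ≤ n - a} (Y_b + Z_b)`, and symmetrically for `Y_a`. The `Z`-terms
cancel in `D_a = X_a - Y_a`, so `A D_a = (n - a - 2) D_a - ∑_{b ≤ n - a} D_b`, and telescoping gives
`A (D_k - D_{k+1}) = (n - k - 2) D_k - (n - k - 3) D_{k+1} - D_{n-k}`. Since `R = D_k - D_{k+1}` and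
`n - k` is `k` or `k + 1` according to the parity of `n`, the last term folds into one of the first
two and `R` is an eigenvector. -/

lemma univ_fin_three_eq {p q r : Fin 3} (hpq : p ≠ q) (hpr : p ≠ r) (hqr : q ≠ r) :
    ({p, q, r} : Finset (Fin 3)) = univ :=
  eq_univ_of_card _ (card_eq_three.mpr ⟨p, q, r, hpq, hpr, hqr, rfl⟩)

lemma sum_fin_three_eq_add_add {M : Type*} [AddCommMonoid M] {p q r : Fin 3} (hpq : p ≠ q)
    (hpr : p ≠ r) (hqr : q ≠ r) (f : Fin 3 → M) : ∑ s, f s = f p + f q + f r := by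
  rw [← univ_fin_three_eq hpq hpr hqr, sum_insert (by simp [hpq, hpr]), sum_pair hqr, add_assoc]

namespace SRVert

variable {n : ℕ} {p q r : Fin 3}

lemma coord_add_coord_add_coord (v : SRVert 3 n) (hpq : p ≠ q) (hpr : p ≠ r) (hqr : q ≠ r) :
    v.1 p + v.1 q + v.1 r = n :=
  sum_fin_three_eq_add_add hpq hpr hqr v.1 ▸ v.2

lemma ext_iff_coords (hpq : p ≠ q) (hpr : p ≠ r) (hqr : q ≠ r) {v w : SRVert 3 n} :
    v = w ↔ v.1 p = w.1 p ∧ v.1 q = w.1 q ∧ v.1 r = w.1 r := by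
  refine ⟨by rintro rfl; simp, fun ⟨hp, hq, hr⟩ => Subtype.ext (funext fun s => ?_)⟩
  have hs : s ∈ ({p, q, r} : Finset (Fin 3)) := univ_fin_three_eq hpq hpr hqr ▸ mem_univ s
  simp only [mem_insert, mem_singleton] at hs
  rcases hs with rfl | rfl | rfl <;> assumption

lemma card_filter_coord_eq_and_coord_eq (hpq : p ≠ q) (hpr : p ≠ r) (hqr : q ≠ r) (a b : ℕ) :
    #{w : SRVert 3 n | w.1 p = a ∧ w.1 q = b} = if a + b ≤ n then 1 else 0 := by
  split_ifs with hab
  · let u : SRVert 3 n := ⟨fun s => if s = p then a else if s = q then b else n - a - b, by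
      rw [sum_fin_three_eq_add_add hpq hpr hqr]
      simp only [if_pos, hpq.symm, hpr.symm, hqr.symm, if_false]
      omega⟩
    rw [card_eq_one]
    refine ⟨u, eq_singleton_iff_unique_mem.mpr ⟨by simp [u, hpq.symm], fun w hw => ?_⟩⟩
    rw [mem_filter] at hw
    have := coord_add_coord_add_coord w hpq hpr hqr
    rw [ext_iff_coords hpq hpr hqr]
    simp only [u, if_pos, hpq.symm, hpr.symm, hqr.symm, if_false]
    omega
  · rw [card_eq_zero, filter_eq_empty_iff]
    rintro w - ⟨rfl, rfl⟩
    have := coord_add_coord_add_coord w hpq hpr hqr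
    omega

lemma card_filter_coord_eq (hpq : p ≠ q) (hpr : p ≠ r) (hqr : q ≠ r) (a : ℕ) :
    #{w : SRVert 3 n | w.1 p = a} = n + 1 - a := by
  have hmaps : ∀ w ∈ ({w : SRVert 3 n | w.1 p = a} : Finset _), w.1 q ∈ range (n + 1) := by
    intro w _
    have := coord_add_coord_add_coord w hpq hpr hqr
    rw [mem_range]
    omega
  rw [card_eq_sum_card_fiberwise hmaps]
  simp only [filter_filter, card_filter_coord_eq_and_coord_eq hpq hpr hqr, sum_boole,
    Nat.cast_id]
  rw [← card_range (n + 1 - a)]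
  congr 1
  ext b
  simp only [mem_filter, mem_range]
  omega

end SRVert

namespace SR

open Matrix SRVert

variable {n : ℕ} {p q r : Fin 3}

lemma three_adj_iff (hpq : p ≠ q) (hpr : p ≠ r) (hqr : q ≠ r) {v w : SRVert 3 n} :
    (SR 3 n).Adj v w ↔ v ≠ w ∧ (v.1 p = w.1 p ∨ v.1 q = w.1 q ∨ v.1 r = w.1 r) := by
  have hv := coord_add_coord_add_coord v hpq hpr hqr
  have hw := coord_add_coord_add_coord w hpq hpr hqr
  -- two coordinates determine the third, so vertices never differ in exactly one coordinate
  change #{s | v.1 s ≠ w.1 s} = 2 ↔ _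
  rw [ne_eq, ext_iff_coords hpq hpr hqr, card_filter, sum_fin_three_eq_add_add hpq hpr hqr]
  by_cases h₁ : v.1 p = w.1 p <;> by_cases h₂ : v.1 q = w.1 q <;> by_cases h₃ : v.1 r = w.1 r <;>
    simp [h₁, h₂, h₃] <;> omega

lemma card_neighborFinset_filter_coord_eq (hpq : p ≠ q) (hpr : p ≠ r) (hqr : q ≠ r)
    (v : SRVert 3 n) (a : ℕ) :
    #{w ∈ (SR 3 n).neighborFinset v | w.1 p = a} =
      if v.1 p = a then n - a
      else (if a + v.1 q ≤ n then 1 else 0) + (if a + v.1 r ≤ n then 1 else 0) := by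
  by_cases hva : v.1 p = a
  · rw [if_pos hva]
    have hset : {w ∈ (SR 3 n).neighborFinset v | w.1 p = a} =
        ({w | w.1 p = a} : Finset (SRVert 3 n)).erase v := by
      ext w
      simp only [mem_filter, SimpleGraph.mem_neighborFinset, three_adj_iff hpq hpr hqr, mem_erase,
        mem_univ, true_and]
      constructor
      · rintro ⟨⟨hvw, -⟩, hw⟩
        exact ⟨Ne.symm hvw, hw⟩
      · rintro ⟨hwv, hw⟩
        exact ⟨⟨Ne.symm hwv, Or.inl (hva.trans hw.symm)⟩, hw⟩
    rw [hset, card_erase_of_mem (by simp [hva]), card_filter_coord_eq hpq hpr hqr]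
    omega
  · rw [if_neg hva]
    have hset : {w ∈ (SR 3 n).neighborFinset v | w.1 p = a} =
        ({w | w.1 p = a ∧ w.1 q = v.1 q} : Finset (SRVert 3 n)) ∪
          ({w | w.1 p = a ∧ w.1 r = v.1 r} : Finset (SRVert 3 n)) := by
      ext w
      simp only [mem_filter, SimpleGraph.mem_neighborFinset, three_adj_iff hpq hpr hqr, mem_union,
        mem_univ, true_and]
      constructor
      · rintro ⟨⟨-, hp | hq | hr⟩, hw⟩
        · exact absurd (hp.trans hw) hva
        · exact Or.inl ⟨hw, hq.symm⟩
        · exact Or.inr ⟨hw, hr.symm⟩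
      · rintro (⟨hw, hq⟩ | ⟨hw, hr⟩)
        · exact ⟨⟨by rintro rfl; exact hva hw, Or.inr (Or.inl hq.symm)⟩, hw⟩
        · exact ⟨⟨by rintro rfl; exact hva hw, Or.inr (Or.inr hr.symm)⟩, hw⟩
    have hdisj : Disjoint ({w | w.1 p = a ∧ w.1 q = v.1 q} : Finset (SRVert 3 n))
        ({w | w.1 p = a ∧ w.1 r = v.1 r} : Finset (SRVert 3 n)) := by
      rw [disjoint_filter]
      rintro w - ⟨hw, hq⟩ ⟨-, hr⟩
      have := coord_add_coord_add_coord v hpq hpr hqr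
      have := coord_add_coord_add_coord w hpq hpr hqr
      omega
    rw [hset, card_union_of_disjoint hdisj, card_filter_coord_eq_and_coord_eq hpq hpr hqr,
      card_filter_coord_eq_and_coord_eq hpr hpq hqr.symm]

def lineVec (n : ℕ) (p : Fin 3) (a : ℕ) : SRVert 3 n → ℝ := fun v => if v.1 p = a then 1 else 0

lemma sum_lineVec_range_apply (m : ℕ) (v : SRVert 3 n) :
    (∑ b ∈ range m, lineVec n p b) v = if v.1 p < m then 1 else 0 := by
  simp [lineVec, Finset.sum_apply, sum_ite_eq]

theorem adjMatrix_mulVec_lineVec (hpq : p ≠ q) (hpr : p ≠ r) (hqr : q ≠ r) (a : ℕ) :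
    (SR 3 n).adjMatrix ℝ *ᵥ lineVec n p a =
      ((n : ℝ) - a - 2) • lineVec n p a +
        ∑ b ∈ range (n + 1 - a), (lineVec n q b + lineVec n r b) := by
  ext v
  have hv := coord_add_coord_add_coord v hpq hpr hqr
  rw [SimpleGraph.adjMatrix_mulVec_apply, sum_add_distrib]
  simp only [Pi.add_apply, Pi.smul_apply, sum_lineVec_range_apply, smul_eq_mul]
  simp only [lineVec, sum_boole, card_neighborFinset_filter_coord_eq hpq hpr hqr]
  split_ifs <;> first | omega | (push_cast [Nat.cast_sub (show a ≤ n by omega)]; ring) | norm_num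

theorem adjMatrix_mulVec_Xv_sub_Yv (a : ℕ) :
    (SR 3 n).adjMatrix ℝ *ᵥ (Xv n a - Yv n a) =
      ((n : ℝ) - a - 2) • (Xv n a - Yv n a) - ∑ b ∈ range (n + 1 - a), (Xv n b - Yv n b) := by
  rw [show Xv n = lineVec n 0 from rfl, show Yv n = lineVec n 1 from rfl, mulVec_sub,
    adjMatrix_mulVec_lineVec (q := 1) (r := 2) (by decide) (by decide) (by decide),
    adjMatrix_mulVec_lineVec (q := 0) (r := 2) (by decide) (by decide) (by decide),
    sum_sub_distrib, sum_add_distrib, sum_add_distrib, smul_sub]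
  abel

theorem adjMatrix_mulVec_Xv_sub_Yv_sub_succ {a : ℕ} (ha : a < n) :
    (SR 3 n).adjMatrix ℝ *ᵥ ((Xv n a - Yv n a) - (Xv n (a + 1) - Yv n (a + 1))) =
      ((n : ℝ) - a - 2) • (Xv n a - Yv n a) - ((n : ℝ) - a - 3) • (Xv n (a + 1) - Yv n (a + 1))
        - (Xv n (n - a) - Yv n (n - a)) := by
  rw [mulVec_sub, adjMatrix_mulVec_Xv_sub_Yv, adjMatrix_mulVec_Xv_sub_Yv,
    show n + 1 - a = n - a + 1 by omega, show n + 1 - (a + 1) = n - a by omega, sum_range_succ]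
  push_cast
  module

lemma Xv_sub_Yv_sub_succ_ne_zero {a : ℕ} (ha : a < n) :
    (Xv n a - Yv n a) - (Xv n (a + 1) - Yv n (a + 1)) ≠ 0 := by
  intro h
  have hv := congrFun h ⟨![a + 1, 0, n - (a + 1)], by simp [Fin.sum_univ_three]; omega⟩
  obtain rfl | ha₀ := Nat.eq_zero_or_pos a
  · norm_num [Xv, Yv] at hv
  · norm_num [Xv, Yv, ha₀.ne] at hv

end SR

/-- with `k = ⌊n/2⌋`, the vector `R = X_k - Y_k - X_{k+1} + Y_{k+1}`
is a nonzero eigenvector of the adjacency matrix of `SR(3,n)`, with eigenvalue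
`(n-6)/2` for even `n` and `(n-3)/2` for odd `n`. -/
theorem R_eigenvector (n : ℕ) (hn : 1 ≤ n) :
    Xv n (n/2) - Yv n (n/2) - Xv n (n/2 + 1) + Yv n (n/2 + 1) ≠ 0 ∧
    ((SR 3 n).adjMatrix ℝ).mulVec
        (Xv n (n/2) - Yv n (n/2) - Xv n (n/2 + 1) + Yv n (n/2 + 1))
      = (if Even n then ((n : ℝ) - 6)/2 else ((n : ℝ) - 3)/2) •
        (Xv n (n/2) - Yv n (n/2) - Xv n (n/2 + 1) + Yv n (n/2 + 1)) := by
  have hR : Xv n (n/2) - Yv n (n/2) - Xv n (n/2 + 1) + Yv n (n/2 + 1) =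
      (Xv n (n/2) - Yv n (n/2)) - (Xv n (n/2 + 1) - Yv n (n/2 + 1)) := by abel
  have hk : n / 2 < n := Nat.div_lt_self hn one_lt_two
  rw [hR]
  refine ⟨SR.Xv_sub_Yv_sub_succ_ne_zero hk, ?_⟩
  rw [SR.adjMatrix_mulVec_Xv_sub_Yv_sub_succ hk]
  obtain ⟨k, rfl | rfl⟩ := Nat.even_or_odd' n
  · rw [if_pos (even_two_mul k), show 2 * k / 2 = k by omega, show 2 * k - k = k by omega]
    push_cast
    module
  · rw [if_neg (Nat.not_even_two_mul_add_one k), show (2 * k + 1) / 2 = k by omega,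
      show 2 * k + 1 - k = k + 1 by omega]
    push_cast
    module
end

section
/- For every integer k with 0 <= k <= floor((n-2)/2), the vector Q_k = (n-2k+1)(n-2k+2) Z_k + sum_{j=k}^{n-k} [(2j-n)(X_j + Y_j) - 2(n-j-k+1) Z_j] is a nonzero eigenvector of the adjacency matrix of SR(3,n) with eigenvalue n-k-2. -/
/-!
Two distinct vertices of `SR(3,n)` are adjacent exactly when they agree in one coordinate
(agreeing in two forces agreeing in all three), so `A = M₀ + M₁ + M₂ - 3I`, where `Mₗ` sums over
the line of vertices sharing the `l`-th coordinate. The vector `Q_k` has the form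
`v ↦ f(v₀) + f(v₁) + g(v₂)` for piecewise-linear profiles `f`, `g`, and `Mₗ` sends `v ↦ h(v_m)`
to `v ↦ (n - v_l + 1) h(v_l)` if `m = l` and to `v ↦ ∑_{t ≤ n - v_l} h(t)` otherwise. The
eigenvalue equation thus splits into two one-variable identities between `f`, `g` and their
partial sums, which are sums of arithmetic progressions. Evaluating at `(n-k, 0, k)` shows
`Q_k ≠ 0`.
-/

open Finset

namespace SRVert

variable {d n : ℕ}

lemma coord_le_s12 (v : SRVert d n) (l : Fin d) : v.1 l ≤ n :=
  (single_le_sum (f := v.1) (fun _ _ => Nat.zero_le _) (mem_univ l)).trans_eq v.2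

lemma coord_add_coord_le (v : SRVert d n) {l m : Fin d} (hlm : l ≠ m) : v.1 l + v.1 m ≤ n :=
  calc v.1 l + v.1 m = ∑ p ∈ {l, m}, v.1 p := (sum_pair hlm).symm
    _ ≤ ∑ p, v.1 p := sum_le_sum_of_subset (subset_univ _)
    _ = n := v.2

lemma eq_of_coord_eq_of_coord_eq {v w : SRVert 3 n} {l m : Fin 3} (hlm : l ≠ m)
    (hl : v.1 l = w.1 l) (hm : v.1 m = w.1 m) : v = w := by
  have hv := v.2
  have hw := w.2
  simp only [Fin.sum_univ_three] at hv hw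
  apply Subtype.ext
  funext p
  fin_cases l <;> fin_cases m <;> fin_cases p <;> simp_all <;> omega

lemma exists_coord_eq_coord_eq {l m : Fin 3} (hlm : l ≠ m) {i t : ℕ} (h : i + t ≤ n) :
    ∃ v : SRVert 3 n, v.1 l = i ∧ v.1 m = t := by
  obtain ⟨r, hrl, hrm⟩ : ∃ r, r ≠ l ∧ r ≠ m := by revert l m; decide
  refine ⟨⟨Pi.single l i + Pi.single m t + Pi.single r (n - i - t), ?_⟩, ?_, ?_⟩
  · simp only [Pi.add_apply, sum_add_distrib, sum_pi_single', mem_univ, if_true]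
    omega
  · simp [hlm.symm, hrl.symm]
  · simp [hlm, hrm.symm]

lemma sum_coord_eq_comp_of_ne {l m : Fin 3} (hlm : l ≠ m) (v : SRVert 3 n) (h : ℕ → ℝ) :
    ∑ w ∈ univ.filter (fun w : SRVert 3 n => w.1 l = v.1 l), h (w.1 m)
      = ∑ t ∈ range (n - v.1 l + 1), h t := by
  rw [← sum_image (g := fun w : SRVert 3 n => w.1 m) fun w hw w' hw' hww' =>
    eq_of_coord_eq_of_coord_eq hlm ((mem_filter.1 hw).2.trans (mem_filter.1 hw').2.symm) hww']
  congr 1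
  ext t
  simp only [mem_image, mem_filter, mem_univ, true_and, mem_range]
  constructor
  · rintro ⟨w, hw, rfl⟩
    have := coord_add_coord_le w hlm
    omega
  · intro ht
    have := coord_le_s12 v l
    exact exists_coord_eq_coord_eq hlm (by omega)

lemma sum_coord_eq_comp_self (l : Fin 3) (v : SRVert 3 n) (h : ℕ → ℝ) :
    ∑ w ∈ univ.filter (fun w : SRVert 3 n => w.1 l = v.1 l), h (w.1 l)
      = ((n : ℝ) - v.1 l + 1) * h (v.1 l) := by
  have hl : l ≠ l + 1 := by revert l; decide
  have hcard := sum_coord_eq_comp_of_ne hl v fun _ => 1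
  rw [sum_const, sum_const, card_range, nsmul_one, nsmul_one] at hcard
  rw [sum_congr rfl fun w hw => by rw [(mem_filter.1 hw).2], sum_const, nsmul_eq_mul, hcard,
    Nat.cast_add, Nat.cast_sub (coord_le_s12 v l), Nat.cast_one]

end SRVert

lemma SR_three_adjMatrix_apply {n : ℕ} (v w : SRVert 3 n) :
    (SR 3 n).adjMatrix ℝ v w
      = ∑ l, (if v.1 l = w.1 l then 1 else 0) - 3 * if v = w then 1 else 0 := by
  rw [SimpleGraph.adjMatrix_apply]
  by_cases hvw : v = w
  · subst hvw
    simp [SR]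
  have h01 : ¬(v.1 0 = w.1 0 ∧ v.1 1 = w.1 1) := fun h =>
    hvw (SRVert.eq_of_coord_eq_of_coord_eq (by decide) h.1 h.2)
  have h02 : ¬(v.1 0 = w.1 0 ∧ v.1 2 = w.1 2) := fun h =>
    hvw (SRVert.eq_of_coord_eq_of_coord_eq (by decide) h.1 h.2)
  have h12 : ¬(v.1 1 = w.1 1 ∧ v.1 2 = w.1 2) := fun h =>
    hvw (SRVert.eq_of_coord_eq_of_coord_eq (by decide) h.1 h.2)
  simp only [SR, card_filter, Fin.sum_univ_three, hvw, if_false, mul_zero, sub_zero]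
  by_cases h0 : v.1 0 = w.1 0 <;> by_cases h1 : v.1 1 = w.1 1 <;> by_cases h2 : v.1 2 = w.1 2 <;>
    simp_all

lemma SR_three_adjMatrix_mulVec_apply {n : ℕ} (x : SRVert 3 n → ℝ) (v : SRVert 3 n) :
    ((SR 3 n).adjMatrix ℝ).mulVec x v
      = ∑ l, ∑ w ∈ univ.filter (fun w : SRVert 3 n => w.1 l = v.1 l), x w - 3 * x v := by
  simp only [Matrix.mulVec, dotProduct, SR_three_adjMatrix_apply, sub_mul, sum_sub_distrib,
    sum_mul, mul_assoc, ← mul_sum, ite_mul, one_mul, zero_mul, sum_ite_eq, mem_univ, if_true]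
  rw [sum_comm]
  simp only [sum_ite, sum_const_zero, add_zero, eq_comm]

lemma sum_range_ite_mem_Icc {M : Type*} [AddCommMonoid M] (φ : ℕ → M) (a b N : ℕ) :
    ∑ t ∈ range (N + 1), (if t ∈ Icc a b then φ t else 0) = ∑ t ∈ Icc a (min N b), φ t := by
  rw [← sum_filter]
  congr 1
  ext t
  simp only [mem_filter, mem_range, mem_Icc]
  omega

lemma sum_Icc_mul_sub (α β : ℝ) {a b : ℕ} (hab : a ≤ b + 1) :
    ∑ t ∈ Icc a b, (α * t - β) = (b + 1 - a) * (α * (a + b) / 2 - β) := by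
  induction b with
  | zero => interval_cases a <;> simp
  | succ b ih =>
    rcases Nat.lt_or_ge (b + 1) a with hba | hab'
    · rw [show a = b + 2 by omega, Icc_eq_empty (by omega), sum_empty]
      push_cast
      ring
    · rw [sum_Icc_succ_top hab', ih hab']
      push_cast
      ring

section Profiles

variable (n k : ℕ)

noncomputable def xProfile (t : ℕ) : ℝ :=
  if t ∈ Icc k (n - k) then 2 * (t : ℝ) - n else 0

noncomputable def zProfile (t : ℕ) : ℝ :=
  (if t = k then ((n : ℝ) - 2 * k + 1) * ((n : ℝ) - 2 * k + 2) else 0)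
    + if t ∈ Icc k (n - k) then 2 * (t : ℝ) - 2 * ((n : ℝ) - k + 1) else 0

noncomputable def Qvec : SRVert 3 n → ℝ :=
  (((n : ℝ) - 2*k + 1) * ((n : ℝ) - 2*k + 2)) • Zv n k
    + ∑ j ∈ Finset.Icc k (n-k),
        ((2*(j : ℝ) - n) • (Xv n j + Yv n j) - (2 * ((n : ℝ) - j - k + 1)) • Zv n j)

lemma Qvec_apply (v : SRVert 3 n) :
    Qvec n k v = xProfile n k (v.1 0) + xProfile n k (v.1 1) + zProfile n k (v.1 2) := by
  simp only [Qvec, xProfile, zProfile, Xv, Yv, Zv, Pi.add_apply, Pi.smul_apply, Pi.sub_apply,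
    Finset.sum_apply, smul_eq_mul, mul_add, mul_ite, mul_one, mul_zero, sum_add_distrib,
    sum_sub_distrib, sum_ite_eq]
  split_ifs <;> ring

-- The terms of `(A Q)(v) - (n - k - 2) Q(v)` depending on one coordinate of `v` collect to the
-- left-hand sides of these two identities.
lemma xProfile_balance (hk : 2 * k ≤ n + 1) {t : ℕ} (ht : t ≤ n) :
    ((k : ℝ) - t) * xProfile n k t + ∑ s ∈ range (n - t + 1), xProfile n k s
      + ∑ s ∈ range (n - t + 1), zProfile n k s = 0 := by
  simp only [xProfile, zProfile, sum_add_distrib, sum_ite_eq', mem_range, sum_range_ite_mem_Icc]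
  rcases lt_or_ge t k with htk | hkt
  · rw [if_neg (by simp only [mem_Icc]; omega), if_pos (by omega), min_eq_right (by omega),
      sum_Icc_mul_sub _ _ (by omega), sum_Icc_mul_sub _ _ (by omega), Nat.cast_sub (by omega)]
    ring
  rcases le_or_gt t (n - k) with htk | htk
  · rw [if_pos (by simp only [mem_Icc]; omega), if_pos (by omega), min_eq_left (by omega),
      sum_Icc_mul_sub _ _ (by omega), sum_Icc_mul_sub _ _ (by omega), Nat.cast_sub ht]
    ring
  · have hempty : Icc k (min (n - t) (n - k)) = ∅ := Icc_eq_empty (by omega)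
    rw [if_neg (by simp only [mem_Icc]; omega), if_neg (by omega), hempty]
    simp

lemma zProfile_balance (hk : 2 * k ≤ n + 1) {t : ℕ} (ht : t ≤ n) :
    ((k : ℝ) - t) * zProfile n k t + 2 * ∑ s ∈ range (n - t + 1), xProfile n k s = 0 := by
  have hpeak : ((k : ℝ) - t) * (if t = k then ((n : ℝ) - 2 * k + 1) * (n - 2 * k + 2) else 0)
      = 0 := by
    split_ifs with htk <;> simp [htk]
  simp only [xProfile, zProfile, sum_range_ite_mem_Icc]
  rw [mul_add, hpeak, zero_add]
  rcases lt_or_ge t k with htk | hkt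
  · rw [if_neg (by simp only [mem_Icc]; omega), min_eq_right (by omega),
      sum_Icc_mul_sub _ _ (by omega), Nat.cast_sub (by omega)]
    ring
  rcases le_or_gt t (n - k) with htk | htk
  · rw [if_pos (by simp only [mem_Icc]; omega), min_eq_left (by omega),
      sum_Icc_mul_sub _ _ (by omega), Nat.cast_sub ht]
    ring
  · have hempty : Icc k (min (n - t) (n - k)) = ∅ := Icc_eq_empty (by omega)
    rw [if_neg (by simp only [mem_Icc]; omega), hempty]
    simp

end Profiles

lemma adjMatrix_mulVec_Qvec {n k : ℕ} (hk : 2 * k ≤ n + 1) :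
    ((SR 3 n).adjMatrix ℝ).mulVec (Qvec n k) = ((n : ℝ) - k - 2) • Qvec n k := by
  funext v
  simp (disch := decide) only [SR_three_adjMatrix_mulVec_apply, Qvec_apply, Fin.sum_univ_three,
    sum_add_distrib, SRVert.sum_coord_eq_comp_self, SRVert.sum_coord_eq_comp_of_ne,
    Pi.smul_apply, smul_eq_mul]
  linear_combination xProfile_balance n k hk (v.coord_le_s12 0)
    + xProfile_balance n k hk (v.coord_le_s12 1) + zProfile_balance n k hk (v.coord_le_s12 2)

lemma Qvec_ne_zero {n k : ℕ} (hk : 2 * k + 1 ≤ n) : Qvec n k ≠ 0 := by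
  obtain ⟨v, hv0, hv2⟩ :=
    SRVert.exists_coord_eq_coord_eq (n := n) (by decide : (0 : Fin 3) ≠ 2) (i := n - k) (t := k)
      (by omega)
  have hv1 : v.1 1 = 0 := by
    have := v.2
    simp only [Fin.sum_univ_three] at this
    omega
  intro hQ
  have hQv := congrFun hQ v
  rw [Qvec_apply, hv0, hv1, hv2] at hQv
  simp only [xProfile, zProfile, Pi.zero_apply, if_true] at hQv
  rw [if_pos (mem_Icc.2 ⟨by omega, le_rfl⟩), if_pos (mem_Icc.2 ⟨le_rfl, by omega⟩),
    Nat.cast_sub (by omega : k ≤ n)] at hQv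
  have hn : (2 * k + 1 : ℝ) ≤ n := by exact_mod_cast hk
  split_ifs at hQv with h0
  · obtain rfl : k = 0 := by simp only [mem_Icc] at h0; omega
    push_cast at hQv
    nlinarith
  · nlinarith

/-- for `0 ≤ k ≤ ⌊(n-2)/2⌋`, the vector `Q_k` is a nonzero
eigenvector of the adjacency matrix of `SR(3,n)` with eigenvalue `n - k - 2`. -/
theorem Q_eigenvector (n k : ℕ) (hk : 2 * k + 2 ≤ n) :
    (((n : ℝ) - 2*k + 1) * ((n : ℝ) - 2*k + 2)) • Zv n k
        + ∑ j ∈ Finset.Icc k (n-k),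
            ((2*(j : ℝ) - n) • (Xv n j + Yv n j)
              - (2 * ((n : ℝ) - j - k + 1)) • Zv n j) ≠ 0 ∧
    ((SR 3 n).adjMatrix ℝ).mulVec
        ((((n : ℝ) - 2*k + 1) * ((n : ℝ) - 2*k + 2)) • Zv n k
          + ∑ j ∈ Finset.Icc k (n-k),
              ((2*(j : ℝ) - n) • (Xv n j + Yv n j)
                - (2 * ((n : ℝ) - j - k + 1)) • Zv n j))
      = ((n : ℝ) - k - 2) •
        ((((n : ℝ) - 2*k + 1) * ((n : ℝ) - 2*k + 2)) • Zv n k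
          + ∑ j ∈ Finset.Icc k (n-k),
              ((2*(j : ℝ) - n) • (Xv n j + Yv n j)
                - (2 * ((n : ℝ) - j - k + 1)) • Zv n j)) :=
  ⟨Qvec_ne_zero (by omega), adjMatrix_mulVec_Qvec (by omega)⟩
end

section
/- Let d, n be positive integers, and let p, w in R^d be such that the d! points {p + sigma(w) : sigma in S_d} are distinct vertices of SR(d,n) (where sigma(w) permutes the coordinates of w). Then the signed characteristic vector H_{p,w} = sum over sigma in S_d of sign(sigma) * e_{p+sigma(w)} is an eigenvector of the adjacency matrix of SR(d,n) with eigenvalue -binomial(d,2). -/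
open Finset

/-! The coordinates in which two vertices of `SR d n` differ never form a single coordinate, since
both have coordinate sum `n`. So for `x ≠ y` the pairs `s` of coordinates containing
`diffSet x y` number one if `x ~ y` and zero otherwise, while for `x = y` all `binom d 2` pairs
qualify. Hence `(A H)(v) + binom d 2 · H(v)` is a sum over pairs `{a, b}` of signed sums
`∑ sign σ` over those `σ` for which `f σ` agrees with `v` off `{a, b}`. As `f ((a b) σ)` agrees
with `f σ` off `{a, b}`, the involution `σ ↦ (a b) σ` preserves each of these sets and reverses
signs, so every such sum vanishes. -/

open Equiv Equiv.Perm

section DiffSet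

variable {ι M : Type*} [Fintype ι] [DecidableEq M]

def diffSet (x y : ι → M) : Finset ι := {i | x i ≠ y i}

theorem diffSet_subset_iff {x y : ι → M} {s : Finset ι} :
    diffSet x y ⊆ s ↔ ∀ i ∉ s, x i = y i := by
  simp only [diffSet, Finset.subset_iff, mem_filter, mem_univ, true_and]
  exact forall_congr' fun i => not_imp_comm

theorem diffSet_eq_empty_iff {x y : ι → M} : diffSet x y = ∅ ↔ x = y := by
  simp [diffSet, filter_eq_empty_iff, funext_iff]

theorem diffSet_subset_iff_of_diffSet_subset {x y z : ι → M} {s : Finset ι}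
    (hyz : diffSet y z ⊆ s) : diffSet x y ⊆ s ↔ diffSet x z ⊆ s := by
  rw [diffSet_subset_iff] at hyz
  simp only [diffSet_subset_iff]
  exact forall₂_congr fun i hi => by rw [hyz i hi]

theorem card_diffSet_ne_one [AddCancelCommMonoid M] {x y : ι → M}
    (hxy : ∑ i, x i = ∑ i, y i) : (diffSet x y).card ≠ 1 := by
  classical
  intro h
  obtain ⟨a, ha⟩ := card_eq_one.1 h
  have hoff : ∀ i ∈ univ.erase a, x i = y i := fun i hi =>
    diffSet_subset_iff.1 ha.subset i (by simpa using (mem_erase.1 hi).1)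
  rw [← add_sum_erase _ _ (mem_univ a), ← add_sum_erase _ _ (mem_univ a),
    sum_congr rfl hoff] at hxy
  have ha_mem : a ∈ diffSet x y := ha ▸ mem_singleton_self a
  exact (mem_filter.1 ha_mem).2 (add_right_cancel hxy)

theorem diffSet_eq_of_subset [AddCancelCommMonoid M] {x y : ι → M} {s : Finset ι}
    (hxy : ∑ i, x i = ∑ i, y i) (hne : x ≠ y) (hs : s.card = 2) (hsub : diffSet x y ⊆ s) :
    diffSet x y = s := by
  have hpos : 0 < (diffSet x y).card :=
    card_pos.2 (nonempty_iff_ne_empty.2 (mt diffSet_eq_empty_iff.1 hne))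
  have hle : (diffSet x y).card ≤ 2 := hs ▸ card_le_card hsub
  have hne_one := card_diffSet_ne_one hxy
  exact eq_of_subset_of_card_le hsub (by omega)

end DiffSet

theorem sum_sign_eq_zero_of_swap_mul_iff {ι : Type*} [Fintype ι] [DecidableEq ι]
    {P : Perm ι → Prop} [DecidablePred P] {a b : ι} (hab : a ≠ b)
    (hP : ∀ σ, P (swap a b * σ) ↔ P σ) : ∑ σ with P σ, (sign σ : ℤ) = 0 := by
  have h : ∑ σ with P σ, (sign σ : ℤ) = -∑ σ with P σ, (sign σ : ℤ) := by
    rw [sum_filter, ← sum_neg_distrib]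
    refine Fintype.sum_equiv (Equiv.mulLeft (swap a b)) _ _ fun σ => ?_
    simp only [Equiv.coe_mulLeft, hP, Perm.sign_mul, sign_swap hab]
    split_ifs <;> simp
  omega

open scoped Matrix

namespace SimpleGraph

variable {V R : Type*} [Fintype V] [DecidableEq V] [NonAssocSemiring R] (G : SimpleGraph V)
  [DecidableRel G.Adj]

theorem adjMatrix_mulVec_indicator (x v : V) :
    (G.adjMatrix R *ᵥ fun u => if u = x then 1 else 0) v = if G.Adj v x then 1 else 0 := by
  simp [Matrix.mulVec, dotProduct]

end SimpleGraph

theorem SR.adj_iff {d n : ℕ} {x y : SRVert d n} :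
    (SR d n).Adj x y ↔ (diffSet x.1 y.1).card = 2 :=
  Iff.rfl

theorem SR.adj_indicator_eq {d n : ℕ} (x y : SRVert d n) :
    (if (SR d n).Adj x y then (1 : ℤ) else 0) =
      ∑ s ∈ powersetCard 2 (univ : Finset (Fin d)), (if diffSet x.1 y.1 ⊆ s then 1 else 0) -
        d.choose 2 * if x = y then 1 else 0 := by
  rw [sum_boole]
  by_cases hxy : x = y
  · subst hxy
    simp [diffSet]
  · have hsum : ∑ i, x.1 i = ∑ i, y.1 i := x.2.trans y.2.symm
    have hne : x.1 ≠ y.1 := fun h => hxy (Subtype.ext h)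
    have hfilter : {s ∈ powersetCard 2 (univ : Finset (Fin d)) | diffSet x.1 y.1 ⊆ s} =
        {s ∈ powersetCard 2 (univ : Finset (Fin d)) | diffSet x.1 y.1 = s} :=
      filter_congr fun s hs => ⟨diffSet_eq_of_subset hsum hne (mem_powersetCard.1 hs).2,
        fun h => h.subset⟩
    rw [hfilter, filter_eq, if_neg hxy, mul_zero, sub_zero]
    by_cases hadj : (SR d n).Adj x y
    · simp [hadj, SR.adj_iff.1 hadj]
    · simp [hadj, mt SR.adj_iff.2 hadj]

section Permutohedron

variable {d n : ℕ} {f : Perm (Fin d) → SRVert d n}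

theorem diffSet_swap_mul_subset {p w : Fin d → ℝ} (hf : ∀ σ i, ((f σ).1 i : ℝ) = p i + w (σ⁻¹ i))
    (a b : Fin d) (σ : Perm (Fin d)) : diffSet (f (swap a b * σ)).1 (f σ).1 ⊆ {a, b} := by
  refine diffSet_subset_iff.2 fun i hi => ?_
  simp only [mem_insert, mem_singleton, not_or] at hi
  have hcast : ((f (swap a b * σ)).1 i : ℝ) = (f σ).1 i := by
    rw [hf, hf, mul_inv_rev, swap_inv, Perm.mul_apply, swap_apply_of_ne_of_ne hi.1 hi.2]
  exact_mod_cast hcast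

theorem sum_sign_mul_adj_eq (hswap : ∀ a b σ, diffSet (f (swap a b * σ)).1 (f σ).1 ⊆ {a, b})
    (v : SRVert d n) :
    ∑ σ, (sign σ : ℤ) * (if (SR d n).Adj v (f σ) then 1 else 0) =
      -d.choose 2 * ∑ σ, (sign σ : ℤ) * if v = f σ then 1 else 0 := by
  have hpair : ∀ s ∈ powersetCard 2 (univ : Finset (Fin d)),
      ∑ σ, (sign σ : ℤ) * (if diffSet v.1 (f σ).1 ⊆ s then 1 else 0) = 0 := by
    intro s hs
    obtain ⟨a, b, hab, rfl⟩ := card_eq_two.1 (mem_powersetCard.1 hs).2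
    simp only [mul_boole, ← sum_filter]
    exact sum_sign_eq_zero_of_swap_mul_iff hab fun σ =>
      diffSet_subset_iff_of_diffSet_subset (hswap a b σ)
  simp_rw [SR.adj_indicator_eq, mul_sub, sum_sub_distrib, mul_sum]
  rw [sum_comm, sum_eq_zero hpair, zero_sub, ← sum_neg_distrib]
  exact sum_congr rfl fun σ _ => by ring

end Permutohedron

theorem permutohedron_eigenvector_general (d n : ℕ)
    (p w : Fin d → ℝ) (f : Equiv.Perm (Fin d) → SRVert d n)
    (hf : ∀ σ i, ((f σ).1 i : ℝ) = p i + w (σ⁻¹ i))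
    (hinj : Function.Injective f) :
    (∑ σ : Equiv.Perm (Fin d),
        ((Equiv.Perm.sign σ : ℤ) : ℝ) • (fun v => if v = f σ then (1:ℝ) else 0)) ≠ 0 ∧
    ((SR d n).adjMatrix ℝ).mulVec
        (∑ σ : Equiv.Perm (Fin d),
          ((Equiv.Perm.sign σ : ℤ) : ℝ) • (fun v => if v = f σ then (1:ℝ) else 0))
      = (-(d.choose 2) : ℝ) •
        (∑ σ : Equiv.Perm (Fin d),
          ((Equiv.Perm.sign σ : ℤ) : ℝ) • (fun v => if v = f σ then (1:ℝ) else 0)) := by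
  have hH : ∀ v, (∑ σ : Perm (Fin d), ((sign σ : ℤ) : ℝ) • fun v => if v = f σ then (1:ℝ) else 0) v
      = ∑ σ, ((sign σ : ℤ) : ℝ) * if v = f σ then 1 else 0 := fun v => by
    simp only [Finset.sum_apply, Pi.smul_apply, smul_eq_mul]
  refine ⟨fun h0 => ?_, funext fun v => ?_⟩
  · have h1 := congrFun h0 (f 1)
    simp [hH, hinj.eq_iff] at h1
  · simp only [Matrix.mulVec_sum, Matrix.mulVec_smul, Finset.sum_apply, Pi.smul_apply,
      SimpleGraph.adjMatrix_mulVec_indicator, smul_eq_mul, hH]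
    exact_mod_cast sum_sign_mul_adj_eq (diffSet_swap_mul_subset hf) v

/-- the signed characteristic vector of a lattice permutohedron
`{p + σ(w) : σ ∈ S_d}` contained in `V(d,n)` is an eigenvector of the adjacency
matrix of `SR(d,n)` with eigenvalue `-binom(d,2)`. -/
theorem permutohedron_eigenvector (d n : ℕ) (hd : 1 ≤ d) (hn : 1 ≤ n)
    (p w : Fin d → ℝ) (f : Equiv.Perm (Fin d) → SRVert d n)
    (hf : ∀ σ i, ((f σ).1 i : ℝ) = p i + w (σ⁻¹ i))
    (hinj : Function.Injective f) :
    (∑ σ : Equiv.Perm (Fin d),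
        ((Equiv.Perm.sign σ : ℤ) : ℝ) • (fun v => if v = f σ then (1:ℝ) else 0)) ≠ 0 ∧
    ((SR d n).adjMatrix ℝ).mulVec
        (∑ σ : Equiv.Perm (Fin d),
          ((Equiv.Perm.sign σ : ℤ) : ℝ) • (fun v => if v = f σ then (1:ℝ) else 0))
      = (-(d.choose 2) : ℝ) •
        (∑ σ : Equiv.Perm (Fin d),
          ((Equiv.Perm.sign σ : ℤ) : ℝ) • (fun v => if v = f σ then (1:ℝ) else 0)) :=
  permutohedron_eigenvector_general d n p w f hf hinj
end

section
/- If d >= 1 and n >= binomial(d,2), then the smallest eigenvalue of the adjacency matrix of SR(d,n) equals -binomial(d,2). -/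
open Finset

/-!
The adjacency matrix of `SR(d,n)` is `∑ₛ (Bₛ - I)` over the 2-subsets `s` of coordinates, where
`Bₛ` is the indicator matrix of "agreeing outside `s`". Each `Bₛ` is a sum of all-ones blocks,
hence positive semidefinite, which gives `-binomial(d,2)` as a lower bound for the eigenvalues.
For the matching eigenvector take a vertex `x` with pairwise distinct coordinates and the
alternating sum `∑_σ sign σ · δ_{x∘σ}`: the transposition `(i j)` pairs off the permuted
vertices lying on a common line in direction `{i, j}` with opposite signs, so `Bₛ` kills it.
-/

open Finset Matrix

section OrderedRing

variable {R : Type*} [CommRing R] [LinearOrder R] [IsStrictOrderedRing R]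

theorem sum_mul_sum_fiber_nonneg {α β : Type*} [Fintype α] [DecidableEq β] (f : α → β)
    (v : α → R) : 0 ≤ ∑ x, v x * ∑ y with f y = f x, v y := by
  set F : β → R := fun b => ∑ y with f y = b, v y
  calc 0 ≤ ∑ b ∈ univ.image f, F b * F b := sum_nonneg fun b _ => mul_self_nonneg _
    _ = ∑ b ∈ univ.image f, ∑ x with f x = b, v x * F (f x) := by
      refine sum_congr rfl fun b _ => ?_
      rw [sum_congr rfl fun x hx => by rw [(mem_filter.mp hx).2], ← sum_mul]
    _ = ∑ x, v x * F (f x) :=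
      sum_fiberwise_of_maps_to (fun x _ => mem_image_of_mem f (mem_univ x)) _

theorem le_of_mulVec_eq_smul_of_forall_le_dotProduct_mulVec {ι : Type*} [Fintype ι]
    {A : Matrix ι ι R} {c μ : R} (hA : ∀ v, c * (v ⬝ᵥ v) ≤ v ⬝ᵥ (A *ᵥ v))
    {v : ι → R} (hv : v ≠ 0) (hev : A *ᵥ v = μ • v) : c ≤ μ := by
  have hpos : 0 < v ⬝ᵥ v :=
    (sum_nonneg fun i _ => mul_self_nonneg (v i)).lt_of_ne' (dotProduct_self_eq_zero.not.mpr hv)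
  have := hA v
  rw [hev, dotProduct_smul, smul_eq_mul] at this
  exact le_of_mul_le_mul_right this hpos

end OrderedRing

namespace SRVert

variable {d n : ℕ}

def diffSet (x y : SRVert d n) : Finset (Fin d) := {i | x.1 i ≠ y.1 i}

theorem adj_iff_card_diffSet {x y : SRVert d n} : (SR d n).Adj x y ↔ #(diffSet x y) = 2 :=
  Iff.rfl

theorem diffSet_self (x : SRVert d n) : diffSet x x = ∅ := by
  simp [diffSet]

theorem eq_of_diffSet_subset_singleton {x y : SRVert d n} {i : Fin d}
    (h : diffSet x y ⊆ {i}) : x = y := by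
  have hoff : ∀ k ≠ i, x.1 k = y.1 k := fun k hk => by
    by_contra hne
    exact hk (mem_singleton.mp (h (by simp [diffSet, hne])))
  have hsum := x.2.trans y.2.symm
  rw [← add_sum_erase _ _ (mem_univ i), ← add_sum_erase _ _ (mem_univ i),
    sum_congr rfl fun k hk => hoff k (ne_of_mem_erase hk)] at hsum
  have hi : x.1 i = y.1 i := Nat.add_right_cancel hsum
  exact Subtype.ext (funext fun k => if hk : k = i then hk ▸ hi else hoff k hk)

/-- The coordinate sum is fixed, so one coordinate is determined by all the others. -/
theorem two_le_card_diffSet {x y : SRVert d n} (h : x ≠ y) : 2 ≤ #(diffSet x y) := by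
  by_contra! hlt
  have : Nonempty (Fin d) := by
    by_contra hempty
    exact h (Subtype.ext (funext fun k => (hempty ⟨k⟩).elim))
  obtain ⟨i, hi⟩ := card_le_one_iff_subset_singleton.mp (Nat.le_of_lt_succ hlt)
  exact h (eq_of_diffSet_subset_singleton hi)

noncomputable def line (s : Finset (Fin d)) (x : SRVert d n) : Finset (SRVert d n) :=
  {y | ∀ k ∉ s, y.1 k = x.1 k}

theorem mem_line_iff_diffSet_subset {s : Finset (Fin d)} {x y : SRVert d n} :
    y ∈ line s x ↔ diffSet x y ⊆ s := by
  simp only [line, diffSet, mem_filter, mem_univ, true_and, subset_iff]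
  exact forall_congr' fun k => by rw [not_imp_comm, eq_comm]

theorem line_eq_fiber (s : Finset (Fin d)) (x : SRVert d n) :
    line s x = univ.filter fun y => (fun k : {k // k ∉ s} => y.1 k) = fun k => x.1 k.1 := by
  ext y
  simp [line, funext_iff]

theorem mem_line_erase_iff {s : Finset (Fin d)} (hs : #s = 2) {x y : SRVert d n} :
    y ∈ (line s x).erase x ↔ diffSet x y = s := by
  rw [mem_erase, mem_line_iff_diffSet_subset]
  constructor
  · rintro ⟨hne, hsub⟩
    exact eq_of_subset_of_card_le hsub (hs ▸ two_le_card_diffSet (Ne.symm hne))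
  · rintro rfl
    refine ⟨fun hxy => ?_, subset_rfl⟩
    rw [hxy, diffSet_self, card_empty] at hs
    exact absurd hs (by norm_num)

theorem neighborFinset_eq_biUnion (x : SRVert d n) :
    (SR d n).neighborFinset x = (univ.powersetCard 2).biUnion fun s => (line s x).erase x := by
  ext y
  simp only [SimpleGraph.mem_neighborFinset, adj_iff_card_diffSet, mem_biUnion,
    mem_powersetCard, subset_univ, true_and]
  constructor
  · intro hy
    exact ⟨diffSet x y, hy, (mem_line_erase_iff hy).mpr rfl⟩
  · rintro ⟨s, hs, hy⟩
    rwa [(mem_line_erase_iff hs).mp hy]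

theorem pairwiseDisjoint_line_erase (x : SRVert d n) :
    ((univ.powersetCard 2 : Finset (Finset (Fin d))) : Set (Finset (Fin d))).PairwiseDisjoint
      fun s => (line s x).erase x := by
  intro s hs t ht hst
  simp only [mem_coe, mem_powersetCard, subset_univ, true_and] at hs ht
  refine disjoint_left.mpr fun y hys hyt => hst ?_
  rw [← (mem_line_erase_iff hs).mp hys, (mem_line_erase_iff ht).mp hyt]

theorem adjMatrix_mulVec_apply_eq_sum_line {R : Type*} [NonAssocRing R] (v : SRVert d n → R)
    (x : SRVert d n) :
    ((SR d n).adjMatrix R *ᵥ v) x = ∑ s ∈ univ.powersetCard 2, (∑ y ∈ line s x, v y - v x) := by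
  rw [SimpleGraph.adjMatrix_mulVec_apply, neighborFinset_eq_biUnion,
    sum_biUnion (pairwiseDisjoint_line_erase x)]
  exact sum_congr rfl fun s _ => sum_erase_eq_sub (by simp [line])

theorem sum_mul_sum_line_nonneg (s : Finset (Fin d)) (v : SRVert d n → ℝ) :
    0 ≤ ∑ x, v x * ∑ y ∈ line s x, v y := by
  simp only [line_eq_fiber]
  exact sum_mul_sum_fiber_nonneg _ v

theorem neg_choose_two_mul_le_dotProduct_mulVec (v : SRVert d n → ℝ) :
    -(d.choose 2 : ℝ) * (v ⬝ᵥ v) ≤ v ⬝ᵥ ((SR d n).adjMatrix ℝ *ᵥ v) := by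
  have hform : v ⬝ᵥ ((SR d n).adjMatrix ℝ *ᵥ v)
      = ∑ s ∈ univ.powersetCard 2, ((∑ x, v x * ∑ y ∈ line s x, v y) - v ⬝ᵥ v) := by
    simp only [dotProduct, adjMatrix_mulVec_apply_eq_sum_line, mul_sum, mul_sub]
    rw [sum_comm]
    exact sum_congr rfl fun s _ => sum_sub_distrib _ _
  calc -(d.choose 2 : ℝ) * (v ⬝ᵥ v) = ∑ _s ∈ univ.powersetCard 2, (0 - v ⬝ᵥ v) := by
        rw [sum_const, card_powersetCard, card_univ, Fintype.card_fin, nsmul_eq_mul]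
        ring
    _ ≤ _ := sum_le_sum fun s _ => sub_le_sub_right (sum_mul_sum_line_nonneg s v) _
    _ = _ := hform.symm

noncomputable def permute (σ : Equiv.Perm (Fin d)) (x : SRVert d n) : SRVert d n :=
  ⟨x.1 ∘ σ, (Equiv.sum_comp σ x.1).trans x.2⟩

theorem permute_mul (σ τ : Equiv.Perm (Fin d)) (x : SRVert d n) :
    permute (σ * τ) x = permute τ (permute σ x) :=
  rfl

theorem permute_swap_mem_line_iff {i j : Fin d} {x y : SRVert d n} :
    permute (Equiv.swap i j) y ∈ line {i, j} x ↔ y ∈ line {i, j} x := by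
  simp only [line, mem_filter, mem_univ, true_and, mem_insert, mem_singleton, not_or]
  refine forall_congr' fun k => imp_congr_right fun hk => ?_
  simp [permute, Equiv.swap_apply_of_ne_of_ne hk.1 hk.2]

noncomputable def altVec (x : SRVert d n) : SRVert d n → ℝ :=
  fun y => ∑ σ : Equiv.Perm (Fin d), (Equiv.Perm.sign σ : ℝ) * if y = permute σ x then 1 else 0

theorem sum_line_altVec {i j : Fin d} (hij : i ≠ j) (x z : SRVert d n) :
    ∑ y ∈ line {i, j} z, altVec x y = 0 := by
  set f : Equiv.Perm (Fin d) → ℝ := fun σ => if permute σ x ∈ line {i, j} z then 1 else 0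
  have hsum : ∑ y ∈ line {i, j} z, altVec x y = ∑ σ, (Equiv.Perm.sign σ : ℝ) * f σ := by
    simp only [altVec, f]
    rw [sum_comm]
    exact sum_congr rfl fun σ _ => by rw [← mul_sum, sum_ite_eq']
  -- reindexing by `σ ↦ σ * (i j)` flips every sign and preserves every indicator
  have hanti : ∑ σ, (Equiv.Perm.sign σ : ℝ) * f σ = -∑ σ, (Equiv.Perm.sign σ : ℝ) * f σ := by
    calc ∑ σ, (Equiv.Perm.sign σ : ℝ) * f σ
        = ∑ σ, (Equiv.Perm.sign (σ * Equiv.swap i j) : ℝ) * f (σ * Equiv.swap i j) :=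
          (Equiv.sum_comp (Equiv.mulRight (Equiv.swap i j)) _).symm
      _ = ∑ σ, -((Equiv.Perm.sign σ : ℝ) * f σ) := by
          refine sum_congr rfl fun σ _ => ?_
          simp only [Equiv.Perm.sign_mul, Equiv.Perm.sign_swap hij, f, permute_mul,
            permute_swap_mem_line_iff]
          push_cast
          ring
      _ = _ := sum_neg_distrib _
  rw [hsum]
  linarith

theorem altVec_apply_self {x : SRVert d n} (hx : Function.Injective x.1) : altVec x x = 1 := by
  have hfix : ∀ σ : Equiv.Perm (Fin d), x = permute σ x ↔ σ = 1 := fun σ =>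
    ⟨fun h => Equiv.ext fun k => hx (congrFun (congrArg Subtype.val h) k).symm,
      fun h => h ▸ rfl⟩
  simp only [altVec, hfix, mul_ite, mul_one, mul_zero, sum_ite_eq', mem_univ, if_true,
    Equiv.Perm.sign_one, Units.val_one, Int.cast_one]

theorem altVec_ne_zero {x : SRVert d n} (hx : Function.Injective x.1) : altVec x ≠ 0 := by
  intro h
  simpa [h] using altVec_apply_self hx

theorem adjMatrix_mulVec_altVec (x : SRVert d n) :
    (SR d n).adjMatrix ℝ *ᵥ altVec x = (-(d.choose 2 : ℝ)) • altVec x := by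
  funext z
  rw [adjMatrix_mulVec_apply_eq_sum_line]
  have hline : ∀ s ∈ univ.powersetCard 2,
      ∑ y ∈ line s z, altVec x y - altVec x z = -altVec x z := by
    intro s hs
    obtain ⟨i, j, hij, rfl⟩ := card_eq_two.mp (mem_powersetCard.mp hs).2
    rw [sum_line_altVec hij, zero_sub]
  rw [sum_congr rfl hline, sum_const, card_powersetCard, card_univ, Fintype.card_fin,
    Pi.smul_apply, smul_eq_mul, nsmul_eq_mul]
  ring

theorem exists_injective (hd : 1 ≤ d) (hn : d.choose 2 ≤ n) :
    ∃ x : SRVert d n, Function.Injective x.1 := by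
  let last : Fin d := ⟨d - 1, by omega⟩
  let c : Fin d → ℕ := fun k => k + if k = last then n - d.choose 2 else 0
  have hsum : ∑ k, c k = n := by
    rw [sum_add_distrib, sum_ite_eq', if_pos (mem_univ _),
      Fin.sum_univ_eq_sum_range (fun k => k), sum_range_id, ← Nat.choose_two_right]
    omega
  refine ⟨⟨c, hsum⟩, fun a b hab => ?_⟩
  simp only [c, Fin.ext_iff, last] at hab ⊢
  have := a.isLt
  have := b.isLt
  split_ifs at hab <;> omega

end SRVert

/-- for `n ≥ binom(d,2)`, the smallest eigenvalue of the adjacency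
matrix of `SR(d,n)` equals `-binom(d,2)`: it is attained by some nonzero vector,
and every eigenvalue is at least `-binom(d,2)`. -/
theorem smallest_eigenvalue (d n : ℕ) (hd : 1 ≤ d) (hn : d.choose 2 ≤ n) :
    (∃ v : SRVert d n → ℝ, v ≠ 0 ∧
      ((SR d n).adjMatrix ℝ).mulVec v = (-(d.choose 2 : ℝ)) • v) ∧
    (∀ (μ : ℝ) (v : SRVert d n → ℝ), v ≠ 0 →
      ((SR d n).adjMatrix ℝ).mulVec v = μ • v → -(d.choose 2 : ℝ) ≤ μ) := by
  obtain ⟨x, hx⟩ := SRVert.exists_injective hd hn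
  exact ⟨⟨SRVert.altVec x, SRVert.altVec_ne_zero hx, SRVert.adjMatrix_mulVec_altVec x⟩,
    fun _ _ hv hev => le_of_mulVec_eq_smul_of_forall_le_dotProduct_mulVec
      SRVert.neg_choose_two_mul_le_dotProduct_mulVec hv hev⟩
end
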